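/- (Cycle-preservation of the vertex-elimination rewriting step, correctness of Algorithms 2 and 3) Let V be a type, r : V → V → Prop a directed-graph relation, and v ∈ V. Define the relation r′ on V by: r′ x y if and only if x ≠ v, y ≠ v, and (r x y or (r x v and r v y)). Then r has a cycle if and only if r has a self-loop at v or r′ has a cycle; formally: (∃ x, x is related to itself by the transitive closure of r) ↔ (r v v ∨ ∃ x, x is related to itself by the transitive closure of r′). -/
import Mathlib

private lemma ve_key {V : Type*} {r : V → V → Prop} {v : V} (hvv : ¬ r v v)
    {x y : V} (hx : x ≠ v) (h : Relation.TransGen r x y) :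
    (y ≠ v → Relation.TransGen
        (fun a b => a ≠ v ∧ b ≠ v ∧ (r a b ∨ (r a v ∧ r v b))) x y) ∧
    (y = v → ∃ b, b ≠ v ∧ r b v ∧ (b = x ∨ Relation.TransGen
        (fun a b => a ≠ v ∧ b ≠ v ∧ (r a b ∨ (r a v ∧ r v b))) x b)) := by
  induction h with
  | single hxy =>
      constructor
      · intro hy
        exact Relation.TransGen.single ⟨hx, hy, Or.inl hxy⟩
      · intro hy
        exact ⟨x, hx, hy ▸ hxy, Or.inl rfl⟩
  | @tail y z hxy hyz ih =>
      constructor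
      · intro hz
        by_cases hy : y = v
        · obtain ⟨b, hb, hbv, hxb⟩ := ih.2 hy
          rw [hy] at hyz
          have step : (fun a b => a ≠ v ∧ b ≠ v ∧ (r a b ∨ (r a v ∧ r v b))) b z :=
            ⟨hb, hz, Or.inr ⟨hbv, hyz⟩⟩
          rcases hxb with rfl | hxb
          · exact Relation.TransGen.single step
          · exact hxb.tail step
        · exact (ih.1 hy).tail ⟨hy, hz, Or.inl hyz⟩
      · intro hz
        rw [hz] at hyz
        have hy : y ≠ v := fun h => hvv (h ▸ hyz)
        exact ⟨y, hy, hyz, Or.inr (ih.1 hy)⟩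

private lemma ve_rev {V : Type*} {r : V → V → Prop} {v : V} {x y : V}
    (h : Relation.TransGen (fun a b => a ≠ v ∧ b ≠ v ∧ (r a b ∨ (r a v ∧ r v b))) x y) :
    Relation.TransGen r x y := by
  induction h with
  | single h =>
      rcases h.2.2 with h' | ⟨h1, h2⟩
      · exact Relation.TransGen.single h'
      · exact (Relation.TransGen.single h1).tail h2
  | tail h h2 ih =>
      rcases h2.2.2 with h' | ⟨h1, h2'⟩
      · exact ih.tail h'
      · exact (ih.tail h1).tail h2'

/-- Cycle-preservation of the vertex-elimination rewriting step: eliminating vertex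
`v` (keeping arcs not touching `v` and composing arcs through `v`) preserves the
existence of a cycle, up to a self-loop at `v`. -/
theorem vertex_elimination_preserves_cycles (V : Type*) (r : V → V → Prop) (v : V) :
    (∃ x, Relation.TransGen r x x) ↔
      (r v v ∨ ∃ x, Relation.TransGen
        (fun a b => a ≠ v ∧ b ≠ v ∧ (r a b ∨ (r a v ∧ r v b))) x x) := by
  constructor
  · rintro ⟨x, hx⟩
    by_cases hvv : r v v
    · exact Or.inl hvv
    right
    by_cases hxv : x = v
    · rw [hxv] at hx
      obtain ⟨b, hvb, hbv'⟩ := Relation.TransGen.head'_iff.mp hx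
      have hb : b ≠ v := fun h => hvv (h ▸ hvb)
      rcases Relation.reflTransGen_iff_eq_or_transGen.mp hbv' with h' | hbv
      · exact absurd h'.symm hb
      clear hbv'
      obtain ⟨c, hc, hcv, hcb⟩ := (ve_key hvv hb hbv).2 rfl
      rcases hcb with rfl | hcb
      · exact ⟨c, Relation.TransGen.single ⟨hc, hc, Or.inr ⟨hcv, hvb⟩⟩⟩
      · exact ⟨b, hcb.tail ⟨hc, hb, Or.inr ⟨hcv, hvb⟩⟩⟩
    · exact ⟨x, (ve_key hvv hxv hx).1 hxv⟩
  · rintro (hvv | ⟨x, hx⟩)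
    · exact ⟨v, Relation.TransGen.single hvv⟩
    · exact ⟨x, ve_rev hx⟩
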